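/- arXiv:2006.15377 — 4 statements merged into one kernel-verified Lean document; each statement's English description precedes it below -/
import Mathlib

section
/- Let λ̄ : [0,∞) → [0,∞) be measurable with 0 < ∫₀^∞ λ̄(t) dt < ∞ and suppose ∫₀^∞ λ̄(t) t e^{-ρt} dt > 0. Let ρ ∈ ℝ satisfy ∫₀^∞ λ̄(t) e^{-ρt} dt = 1, and for ε ∈ (0,1) let ρ_ε ∈ ℝ satisfy (1−ε) ∫₀^∞ λ̄(t) e^{-ρ_ε t} dt = 1. Then 0 ≤ ρ − ρ_ε ≤ (ε/(1−ε)) · (∫₀^∞ λ̄(t) t e^{-ρt} dt)^{-1}. -/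
/-!
Write `L r = ∫₀^∞ λ̄(t) e^{-rt} dt`, so that `L ρ = 1` and `L ρ_ε = 1/(1-ε) > 1`. Since `L` is
nonincreasing, `ρ_ε ≤ ρ`. Integrating the tangent-line bound `e^x ≥ 1 + x` at `x = (ρ - ρ_ε) t`
against `λ̄(t) e^{-ρt}` gives `(ρ - ρ_ε) ∫ λ̄(t) t e^{-ρt} dt ≤ L ρ_ε - L ρ = ε/(1-ε)`.
-/

open MeasureTheory Set Filter Real

theorem sub_mul_mul_exp_neg_le_exp_neg_sub_exp_neg (a b t : ℝ) :
    (a - b) * t * exp (-a * t) ≤ exp (-b * t) - exp (-a * t) := by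
  have hsplit : exp (-b * t) = exp ((a - b) * t) * exp (-a * t) := by
    rw [← exp_add]; ring_nf
  have htangent := mul_le_mul_of_nonneg_right (add_one_le_exp ((a - b) * t)) (exp_pos (-a * t)).le
  rw [hsplit]
  linarith

section Laplace

variable {μ : Measure ℝ} {f : ℝ → ℝ}

theorem integral_mul_exp_neg_le_of_le (hf : 0 ≤ᵐ[μ] f) (ht : ∀ᵐ t ∂μ, 0 ≤ t) {a b : ℝ}
    (hab : a ≤ b) (ha : Integrable (fun t => f t * exp (-a * t)) μ) :
    ∫ t, f t * exp (-b * t) ∂μ ≤ ∫ t, f t * exp (-a * t) ∂μ := by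
  refine integral_mono_of_nonneg (hf.mono fun t hft => mul_nonneg hft (exp_pos _).le) ha ?_
  filter_upwards [hf, ht] with t hft ht
  exact mul_le_mul_of_nonneg_left (exp_le_exp.2 (by nlinarith)) hft

theorem sub_mul_integral_mul_mul_exp_neg_le (hf : 0 ≤ᵐ[μ] f) {a b : ℝ}
    (ha : Integrable (fun t => f t * exp (-a * t)) μ)
    (hb : Integrable (fun t => f t * exp (-b * t)) μ)
    (hta : Integrable (fun t => f t * t * exp (-a * t)) μ) :
    (a - b) * ∫ t, f t * t * exp (-a * t) ∂μ
      ≤ ∫ t, f t * exp (-b * t) ∂μ - ∫ t, f t * exp (-a * t) ∂μ := by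
  rw [← integral_const_mul, ← integral_sub hb ha]
  refine integral_mono_ae (hta.const_mul _) (hb.sub ha) ?_
  filter_upwards [hf] with t hft
  have := mul_le_mul_of_nonneg_left (sub_mul_mul_exp_neg_le_exp_neg_sub_exp_neg a b t) hft
  linarith

end Laplace

theorem stmt1_general (lam : ℝ → ℝ) (hnn : ∀ t, 0 ≤ lam t)
    (ρ : ℝ) (hρ : (∫ t in Ioi (0:ℝ), lam t * Real.exp (-ρ * t)) = 1)
    (hden : 0 < ∫ t in Ioi (0:ℝ), lam t * t * Real.exp (-ρ * t))
    (ε : ℝ) (hε : ε ∈ Ioo (0:ℝ) 1)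
    (ρε : ℝ) (hρε : (1 - ε) * ∫ t in Ioi (0:ℝ), lam t * Real.exp (-ρε * t) = 1) :
    0 ≤ ρ - ρε ∧
      ρ - ρε ≤ (ε / (1 - ε)) * (∫ t in Ioi (0:ℝ), lam t * t * Real.exp (-ρ * t))⁻¹ := by
  obtain ⟨hε0, hε1⟩ := hε
  have hlam : 0 ≤ᵐ[volume.restrict (Ioi 0)] lam := ae_of_all _ hnn
  have hLρε : ∫ t in Ioi (0:ℝ), lam t * exp (-ρε * t) = (1 - ε)⁻¹ :=
    eq_inv_of_mul_eq_one_right hρε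
  have hIρ := Integrable.of_integral_ne_zero (hρ ▸ one_ne_zero)
  have hIρε := Integrable.of_integral_ne_zero (hLρε ▸ inv_ne_zero (by linarith))
  have hID := Integrable.of_integral_ne_zero hden.ne'
  have hgt : 1 < (1 - ε)⁻¹ := (one_lt_inv₀ (by linarith)).2 (by linarith)
  constructor
  · refine sub_nonneg.2 (le_of_not_gt fun hlt => ?_)
    have := integral_mul_exp_neg_le_of_le hlam
      ((ae_restrict_mem measurableSet_Ioi).mono fun t ht => le_of_lt ht) hlt.le hIρ
    linarith
  · have key := sub_mul_integral_mul_mul_exp_neg_le hlam hIρ hIρε hID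
    rw [hLρε, hρ, show (1 - ε)⁻¹ - 1 = ε / (1 - ε) by field_simp; ring] at key
    rwa [← div_eq_mul_inv, le_div_iff₀ hden]

theorem stmt1 (lam : ℝ → ℝ) (hmeas : Measurable lam) (hnn : ∀ t, 0 ≤ lam t)
    (hpos : 0 < ∫ t in Ioi (0:ℝ), lam t) (hfin : IntegrableOn lam (Ioi 0))
    (ρ : ℝ) (hρ : (∫ t in Ioi (0:ℝ), lam t * Real.exp (-ρ * t)) = 1)
    (hden : 0 < ∫ t in Ioi (0:ℝ), lam t * t * Real.exp (-ρ * t))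
    (ε : ℝ) (hε : ε ∈ Ioo (0:ℝ) 1)
    (ρε : ℝ) (hρε : (1 - ε) * ∫ t in Ioi (0:ℝ), lam t * Real.exp (-ρε * t) = 1) :
    0 ≤ ρ - ρε ∧
      ρ - ρε ≤ (ε / (1 - ε)) * (∫ t in Ioi (0:ℝ), lam t * t * Real.exp (-ρ * t))⁻¹ :=
  stmt1_general lam hnn ρ hρ hden ε hε ρε hρε
end

section
/- Let {X^N}_{N≥1} be a sequence of real-valued stochastic processes with càdlàg paths. Suppose that for every T > 0: (i) for every ε > 0 and every t ∈ [0,T], ℙ(|X^N(t)| > ε) → 0 as N → ∞; and (ii) for every ε > 0, limsup_N sup_{0≤t≤T} (1/δ) ℙ(sup_{0≤u≤δ} |X^N(t+u) − X^N(t)| > ε) → 0 as δ → 0. Then for every T > 0 and ε > 0, ℙ(sup_{0≤t≤T} |X^N(t)| > ε) → 0 as N → ∞, i.e. X^N → 0 in probability locally uniformly in t. -/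
/-!
Cut `[0, T]` at the grid points `iδ`, `i ≤ ⌊T/δ⌋`. If `|X(t)| > ε` for some `t`, then either
`|X(iδ)| > ε/2` at the grid point `iδ ≤ t` below it, or the oscillation of `X` on `[iδ, iδ + δ]`
exceeds `ε/2`. A union bound over the `T/δ + 1` grid points then bounds
`ℙ(sup_{[0,T]} |X| > ε)` by a finite sum of one-dimensional probabilities, which vanishes as
`N → ∞` by (i), plus `(T + δ) · (1/δ) sup_t ℙ(osc > ε/2)`, whose `limsup` is small for small `δ`
by (ii). Càdlàg paths are bounded on compacts, so the real suprema involved are not junk values.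
-/

open MeasureTheory Set Filter Topology Bornology

def IsCadlag {α : Type*} [TopologicalSpace α] (f : ℝ → α) : Prop :=
  (∀ t, ContinuousWithinAt f (Ici t) t) ∧ ∀ t, ∃ l, Tendsto f (𝓝[<] t) (𝓝 l)

theorem IsCadlag.isBounded_image {α : Type*} [PseudoMetricSpace α] {f : ℝ → α}
    (hf : IsCadlag f) {K : Set ℝ} (hK : IsCompact K) : IsBounded (f '' K) := by
  have hloc : ∀ t, Disjoint (𝓝 t) (comap f (cobounded α)) := fun t => by
    obtain ⟨l, hl⟩ := hf.2 t
    rw [← nhdsLT_sup_nhdsGE t, disjoint_sup_left]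
    exact ⟨hl.disjoint (Metric.disjoint_nhds_cobounded l) tendsto_comap,
      (hf.1 t).disjoint (Metric.disjoint_nhds_cobounded (f t)) tendsto_comap⟩
  have := (hK.disjoint_nhdsSet_left.2 fun t _ => hloc t).mono_left principal_le_nhdsSet
  rwa [disjoint_comap_iff_map, map_principal, disjoint_principal_left, ← isBounded_def] at this

theorem Real.exists_lt_of_lt_biSup {ι : Type*} {s : Set ι} {g : ι → ℝ} {a : ℝ} (ha : 0 ≤ a)
    (h : a < ⨆ i ∈ s, g i) : ∃ i ∈ s, a < g i := by
  contrapose! h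
  exact Real.iSup_le (fun i => Real.iSup_le (h i) ha) ha

theorem le_ciSup₂_of_bddAbove_image {ι α : Type*} [ConditionallyCompleteLattice α] {s : Set ι}
    {g : ι → α} (hg : BddAbove (g '' s)) {i : ι} (hi : i ∈ s) : g i ≤ ⨆ j ∈ s, g j :=
  le_ciSup₂ (f := fun j (_ : j ∈ s) => g j)
    (hg.mono <| iUnion_subset fun _ => range_subset_iff.2 fun hj => mem_image_of_mem g hj) i hi

theorem sub_natFloor_div_mul_mem_Ico {t δ : ℝ} (ht : 0 ≤ t) (hδ : 0 < δ) :
    t - ⌊t / δ⌋₊ * δ ∈ Ico 0 δ := by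
  have hle := (le_div_iff₀ hδ).1 (Nat.floor_le (div_nonneg ht hδ.le))
  have hlt := (div_lt_iff₀ hδ).1 (Nat.lt_floor_add_one (t / δ))
  constructor <;> linarith

theorem natCast_mul_mem_Icc_of_le_floor {T δ : ℝ} (hT : 0 ≤ T) (hδ : 0 < δ) {i : ℕ}
    (hi : i ≤ ⌊T / δ⌋₊) : (i : ℝ) * δ ∈ Icc 0 T := by
  refine ⟨by positivity, (le_div_iff₀ hδ).1 ?_⟩
  exact (Nat.cast_le.2 hi).trans (Nat.floor_le (div_nonneg hT hδ.le))

noncomputable def rightOscillation (f : ℝ → ℝ) (δ t : ℝ) : ℝ :=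
  ⨆ u ∈ Icc (0 : ℝ) δ, |f (t + u) - f t|

theorem abs_sub_le_rightOscillation {f : ℝ → ℝ} {δ t u : ℝ}
    (hf : IsBounded (f '' Icc t (t + δ))) (hu : u ∈ Icc 0 δ) :
    |f (t + u) - f t| ≤ rightOscillation f δ t := by
  obtain ⟨C, hC⟩ := Metric.isBounded_iff.1 hf
  refine le_ciSup₂_of_bddAbove_image (g := fun u => |f (t + u) - f t|) ⟨C, ?_⟩ hu
  rintro _ ⟨v, hv, rfl⟩
  change |f (t + v) - f t| ≤ C
  rw [← Real.dist_eq]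
  exact hC (mem_image_of_mem f ⟨by linarith [hv.1], by linarith [hv.2]⟩)
    (mem_image_of_mem f ⟨le_rfl, by linarith [hv.1, hv.2]⟩)

theorem exists_grid_lt_abs_or_lt_rightOscillation {f : ℝ → ℝ}
    (hf : ∀ a b, IsBounded (f '' Icc a b)) {T δ ε : ℝ} (hδ : 0 < δ) (hε : 0 ≤ ε)
    (h : ε < ⨆ t ∈ Icc 0 T, |f t|) :
    ∃ i ∈ Finset.range (⌊T / δ⌋₊ + 1),
      ε / 2 < |f (i * δ)| ∨ ε / 2 < rightOscillation f δ (i * δ) := by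
  obtain ⟨t, ht, hεt⟩ := Real.exists_lt_of_lt_biSup hε h
  have hi : ⌊t / δ⌋₊ ∈ Finset.range (⌊T / δ⌋₊ + 1) :=
    Finset.mem_range_succ_iff.2 (Nat.floor_le_floor (div_le_div_of_nonneg_right ht.2 hδ.le))
  refine ⟨_, hi, ?_⟩
  have hosc := abs_sub_le_rightOscillation (t := ⌊t / δ⌋₊ * δ) (hf _ _)
    (Ico_subset_Icc_self (sub_natFloor_div_mul_mem_Ico ht.1 hδ))
  rw [add_sub_cancel] at hosc
  by_contra! hcon
  linarith [abs_sub_abs_le_abs_sub (f t) (f (⌊t / δ⌋₊ * δ)), hcon.1, hcon.2]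

theorem measureReal_lt_biSup_abs_le {Ω : Type*} [MeasurableSpace Ω] (P : Measure Ω)
    [IsFiniteMeasure P] {Y : Ω → ℝ → ℝ} (hY : ∀ ω a b, IsBounded (Y ω '' Icc a b))
    {T δ ε : ℝ} (hT : 0 ≤ T) (hδ : 0 < δ) (hε : 0 ≤ ε) :
    P.real {ω | ε < ⨆ t ∈ Icc 0 T, |Y ω t|} ≤
      ∑ i ∈ Finset.range (⌊T / δ⌋₊ + 1), P.real {ω | ε / 2 < |Y ω (i * δ)|} +
        (T / δ + 1) * ⨆ t ∈ Icc 0 T, P.real {ω | ε / 2 < rightOscillation (Y ω) δ t} := by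
  set n := ⌊T / δ⌋₊ + 1
  set S := ⨆ t ∈ Icc 0 T, P.real {ω | ε / 2 < rightOscillation (Y ω) δ t}
  have hcover : {ω | ε < ⨆ t ∈ Icc 0 T, |Y ω t|} ⊆ ⋃ i ∈ Finset.range n,
      ({ω | ε / 2 < |Y ω (i * δ)|} ∪ {ω | ε / 2 < rightOscillation (Y ω) δ (i * δ)}) := by
    intro ω hω
    obtain ⟨i, hi, hiω⟩ := exists_grid_lt_abs_or_lt_rightOscillation (hY ω) hδ hε hω
    exact mem_iUnion₂.2 ⟨i, hi, hiω⟩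
  have hosc : ∀ i ∈ Finset.range n,
      P.real {ω | ε / 2 < rightOscillation (Y ω) δ (i * δ)} ≤ S := fun i hi =>
    le_ciSup₂_of_bddAbove_image (g := fun t => P.real {ω | ε / 2 < rightOscillation (Y ω) δ t})
      ⟨P.real univ, by rintro _ ⟨t, -, rfl⟩; exact measureReal_mono (subset_univ _)⟩
      (natCast_mul_mem_Icc_of_le_floor hT hδ (Finset.mem_range_succ_iff.1 hi))
  have hn : (n : ℝ) ≤ T / δ + 1 := by
    push_cast [n]
    gcongr
    exact Nat.floor_le (div_nonneg hT hδ.le)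
  have hS : 0 ≤ S := Real.iSup_nonneg fun _ => Real.iSup_nonneg fun _ => measureReal_nonneg
  calc P.real {ω | ε < ⨆ t ∈ Icc 0 T, |Y ω t|}
      ≤ ∑ i ∈ Finset.range n, (P.real {ω | ε / 2 < |Y ω (i * δ)|} +
          P.real {ω | ε / 2 < rightOscillation (Y ω) δ (i * δ)}) :=
        (measureReal_mono hcover (measure_ne_top _ _)).trans <|
          (measureReal_biUnion_finset_le _ _).trans <|
            Finset.sum_le_sum fun _ _ => measureReal_union_le _ _
    _ ≤ ∑ i ∈ Finset.range n, P.real {ω | ε / 2 < |Y ω (i * δ)|} + n * S := by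
        rw [Finset.sum_add_distrib]
        grw [Finset.sum_le_card_nsmul _ _ _ hosc]
        simp
    _ ≤ _ := by gcongr

theorem tendsto_zero_of_le_add_mul_limsup {ι : Type*} {l : Filter ι} {p : ι → ℝ}
    {q S : ℝ → ι → ℝ} {T : ℝ} (hT : 0 ≤ T) (hp : ∀ N, 0 ≤ p N)
    (hpqS : ∀ δ > 0, ∀ N, p N ≤ q δ N + (T / δ + 1) * S δ N)
    (hq : ∀ δ > 0, Tendsto (q δ) l (𝓝 0))
    (hS : ∀ δ > 0, IsBoundedUnder (· ≤ ·) l fun N => 1 / δ * S δ N)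
    (hlim : Tendsto (fun δ => limsup (fun N => 1 / δ * S δ N) l) (𝓝[>] 0) (𝓝 0)) :
    Tendsto p l (𝓝 0) := by
  refine tendsto_order.2 ⟨fun a ha => Eventually.of_forall fun N => ha.trans_le (hp N),
    fun η hη => ?_⟩
  set c := η / (2 * (T + 1))
  have hc : 0 < c := by positivity
  have hδ_small : ∀ᶠ δ in 𝓝[>] (0 : ℝ), δ < 1 :=
    eventually_nhdsWithin_of_eventually_nhds (eventually_lt_nhds one_pos)
  obtain ⟨δ, hδc, hδ1, hδ0 : 0 < δ⟩ :=
    ((hlim.eventually (gt_mem_nhds hc)).and (hδ_small.and self_mem_nhdsWithin)).exists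
  filter_upwards [eventually_lt_of_limsup_lt hδc (hS δ hδ0),
    (hq δ hδ0).eventually (gt_mem_nhds (half_pos hη))] with N hSN hqN
  have hmul : (T / δ + 1) * S δ N ≤ η / 2 := calc
    (T / δ + 1) * S δ N = (T + δ) * (1 / δ * S δ N) := by field_simp
    _ ≤ (T + δ) * c := by gcongr
    _ ≤ (T + 1) * c := by gcongr
    _ = η / 2 := by simp only [c]; field_simp
  linarith [hpqS δ hδ0 N]

theorem stmt5 {Ω : Type*} [MeasurableSpace Ω] (P : Measure Ω) [IsProbabilityMeasure P]
    (X : ℕ → Ω → ℝ → ℝ)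
    (hcadlag : ∀ N ω, (∀ t : ℝ, ContinuousWithinAt (X N ω) (Ici t) t) ∧
      ∀ t : ℝ, ∃ l : ℝ, Tendsto (X N ω) (nhdsWithin t (Iio t)) (nhds l))
    (h1 : ∀ T > (0:ℝ), ∀ ε > (0:ℝ), ∀ t ∈ Icc (0:ℝ) T,
      Tendsto (fun N => P {ω | ε < |X N ω t|}) atTop (nhds 0))
    (h2 : ∀ T > (0:ℝ), ∀ ε > (0:ℝ),
      Tendsto (fun δ : ℝ =>
        Filter.limsup (fun N => (1/δ) * ⨆ t ∈ Icc (0:ℝ) T,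
          (P {ω | ε < ⨆ u ∈ Icc (0:ℝ) δ, |X N ω (t+u) - X N ω t|}).toReal) atTop)
        (nhdsWithin 0 (Ioi 0)) (nhds 0)) :
    ∀ T > (0:ℝ), ∀ ε > (0:ℝ),
      Tendsto (fun N => P {ω | ε < ⨆ t ∈ Icc (0:ℝ) T, |X N ω t|}) atTop (nhds 0) := by
  intro T hT ε hε
  rw [← ENNReal.tendsto_toReal_iff (fun _ => measure_ne_top _ _) ENNReal.zero_ne_top,
    ENNReal.toReal_zero]
  have hbdd : ∀ N ω a b, IsBounded (X N ω '' Icc a b) := fun N ω _ _ =>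
    IsCadlag.isBounded_image (hcadlag N ω) isCompact_Icc
  have hgrid : ∀ δ > 0, Tendsto (fun N => ∑ i ∈ Finset.range (⌊T / δ⌋₊ + 1),
      P.real {ω | ε / 2 < |X N ω (i * δ)|}) atTop (𝓝 0) := fun δ hδ => by
    simpa [measureReal_def] using tendsto_finsetSum _ fun i hi =>
      (ENNReal.tendsto_toReal ENNReal.zero_ne_top).comp <| h1 T hT (ε / 2) (half_pos hε) _ <|
        natCast_mul_mem_Icc_of_le_floor hT.le hδ (Finset.mem_range_succ_iff.1 hi)
  have hosc : ∀ δ > 0, IsBoundedUnder (· ≤ ·) atTop fun N => 1 / δ *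
      ⨆ t ∈ Icc 0 T, P.real {ω | ε / 2 < rightOscillation (X N ω) δ t} := fun δ hδ =>
    isBoundedUnder_of ⟨1 / δ, fun _ => mul_le_of_le_one_right (by positivity) <|
      Real.iSup_le (fun _ => Real.iSup_le (fun _ => measureReal_le_one) zero_le_one) zero_le_one⟩
  exact tendsto_zero_of_le_add_mul_limsup hT.le (fun _ => measureReal_nonneg)
    (fun δ hδ N => measureReal_lt_biSup_abs_le P (hbdd N) hT.le hδ hε.le) hgrid hosc
    (h2 T hT (ε / 2) (half_pos hε))
end

section
/- Consider the system of Volterra integral equations on [0,T]: S̄(t) = S̄(0) − ∫₀^t S̄(s) 𝔍̄(s) ds and 𝔍̄(t) = h(t) + ∫₀^t λ̄(t−s) S̄(s) 𝔍̄(s) ds, where h : [0,T] → [0,∞) is bounded measurable, λ̄ : [0,T] → [0, λ*] is bounded measurable, and S̄(0) ∈ [0,1]. Then any two bounded measurable solutions (S̄₁, 𝔍̄₁) and (S̄₂, 𝔍̄₂) with values in [0,1] × [0, C] (for some C) coincide on [0,T]. -/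
/-!
Since `(S, I) ↦ S * I` is `(1 + C)`-Lipschitz for the ℓ¹ distance on `[0,1] × [0,C]` and
`0 ≤ λ̄ ≤ λ*`, the distance `D = |S₁ - S₂| + |I₁ - I₂|` of two solutions satisfies
`D t ≤ K ∫₀ᵗ D` with `K = (1 + λ*) (1 + C)`. Iterating this inequality, starting from
`D ≤ B := 1 + C`, gives `D t ≤ B (K t)ⁿ / n!` for every `n`, so `D = 0` (Grönwall).
-/

open MeasureTheory Set Filter Topology
open scoped Nat

lemma intervalIntegrable_of_abs_le {f : ℝ → ℝ} {a b M : ℝ} (hf : Measurable f)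
    (hM : ∀ s ∈ uIcc a b, |f s| ≤ M) : IntervalIntegrable f volume a b :=
  (intervalIntegrable_const (c := M)).mono_fun' hf.aestronglyMeasurable
    (ae_restrict_of_forall_mem measurableSet_uIoc fun s hs => hM s (uIoc_subset_uIcc hs))

lemma abs_integral_sub_integral_le {g₁ g₂ F : ℝ → ℝ} {a b : ℝ} (hab : a ≤ b)
    (hg₁ : IntervalIntegrable g₁ volume a b) (hg₂ : IntervalIntegrable g₂ volume a b)
    (hF : IntervalIntegrable F volume a b) (hle : ∀ s ∈ Icc a b, |g₁ s - g₂ s| ≤ F s) :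
    |(∫ s in a..b, g₁ s) - ∫ s in a..b, g₂ s| ≤ ∫ s in a..b, F s := by
  rw [← intervalIntegral.integral_sub hg₁ hg₂, ← Real.norm_eq_abs]
  exact intervalIntegral.norm_integral_le_of_norm_le hab
    (ae_of_all _ fun s hs => hle s (Ioc_subset_Icc_self hs)) hF

lemma abs_mul_sub_mul_le (a b c d : ℝ) : |a * b - c * d| ≤ |a| * |b - d| + |d| * |a - c| := by
  calc |a * b - c * d| = |a * (b - d) + d * (a - c)| := by ring_nf
    _ ≤ |a| * |b - d| + |d| * |a - c| := by
      rw [← abs_mul, ← abs_mul]; exact abs_add_le _ _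

section Gronwall

variable {f : ℝ → ℝ} {T B K : ℝ}

theorem le_mul_pow_div_factorial_of_le_mul_integral (hf : Measurable f) (hK : 0 ≤ K)
    (hf0 : ∀ t ∈ Icc 0 T, 0 ≤ f t) (hfB : ∀ t ∈ Icc 0 T, f t ≤ B)
    (hint : ∀ t ∈ Icc 0 T, f t ≤ K * ∫ s in 0..t, f s) (n : ℕ) :
    ∀ t ∈ Icc 0 T, f t ≤ B * (K * t) ^ n / n ! := by
  induction n with
  | zero => simpa using hfB
  | succ n ih =>
    intro t ht
    have hsub : Icc 0 t ⊆ Icc 0 T := Icc_subset_Icc_right ht.2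
    have hfi : IntervalIntegrable f volume 0 t :=
      intervalIntegrable_of_abs_le hf fun s hs => by
        rw [uIcc_of_le ht.1] at hs
        rw [abs_of_nonneg (hf0 s (hsub hs))]
        exact hfB s (hsub hs)
    have hbound : ∫ s in 0..t, f s ≤ ∫ s in 0..t, B * K ^ n / n ! * s ^ n :=
      intervalIntegral.integral_mono_on ht.1 hfi (Continuous.intervalIntegrable (by fun_prop) _ _)
        fun s hs => (ih s (hsub hs)).trans_eq (by rw [mul_pow]; ring)
    calc f t ≤ K * ∫ s in 0..t, f s := hint t ht
      _ ≤ K * ∫ s in 0..t, B * K ^ n / n ! * s ^ n := by gcongr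
      _ = B * (K * t) ^ (n + 1) / (n + 1)! := by
        rw [intervalIntegral.integral_const_mul, integral_pow, Nat.factorial_succ]
        push_cast
        field_simp
        ring

theorem eq_zero_of_le_mul_integral (hf : Measurable f) (hK : 0 ≤ K)
    (hf0 : ∀ t ∈ Icc 0 T, 0 ≤ f t) (hfB : ∀ t ∈ Icc 0 T, f t ≤ B)
    (hint : ∀ t ∈ Icc 0 T, f t ≤ K * ∫ s in 0..t, f s) :
    ∀ t ∈ Icc 0 T, f t = 0 := by
  intro t ht
  have hlim : Tendsto (fun n : ℕ => B * (K * t) ^ n / n !) atTop (𝓝 0) := by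
    simpa [mul_div_assoc] using (FloorSemiring.tendsto_pow_div_factorial_atTop (K * t)).const_mul B
  refine le_antisymm (ge_of_tendsto hlim (Eventually.of_forall fun n => ?_)) (hf0 t ht)
  exact le_mul_pow_div_factorial_of_le_mul_integral hf hK hf0 hfB hint n t ht

end Gronwall

structure IsBoundedSolution (T C S0 : ℝ) (h lam S I : ℝ → ℝ) : Prop where
  measurable_S : Measurable S
  measurable_I : Measurable I
  mem_Icc : ∀ t ∈ Icc 0 T, S t ∈ Icc 0 1 ∧ I t ∈ Icc 0 C
  eq_S : ∀ t ∈ Icc 0 T, S t = S0 - ∫ s in 0..t, S s * I s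
  eq_I : ∀ t ∈ Icc 0 T, I t = h t + ∫ s in 0..t, lam (t - s) * (S s * I s)

namespace IsBoundedSolution

variable {T C S0 L t : ℝ} {h lam S I S' I' : ℝ → ℝ}

lemma abs_mul_le (sol : IsBoundedSolution T C S0 h lam S I) {s : ℝ} (hs : s ∈ Icc 0 T) :
    |S s * I s| ≤ C := by
  obtain ⟨⟨hS0, hS1⟩, hI0, hIC⟩ := sol.mem_Icc s hs
  rw [abs_of_nonneg (mul_nonneg hS0 hI0)]
  nlinarith

lemma intervalIntegrable_mul (sol : IsBoundedSolution T C S0 h lam S I) (ht : t ∈ Icc 0 T) :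
    IntervalIntegrable (fun s => S s * I s) volume 0 t :=
  intervalIntegrable_of_abs_le (sol.measurable_S.mul sol.measurable_I) fun _ hs =>
    sol.abs_mul_le (uIcc_subset_Icc (left_mem_Icc.2 (ht.1.trans ht.2)) ht hs)

lemma intervalIntegrable_kernel_mul (sol : IsBoundedSolution T C S0 h lam S I)
    (hlam : Measurable lam) (hL : ∀ x, |lam x| ≤ L) (ht : t ∈ Icc 0 T) :
    IntervalIntegrable (fun s => lam (t - s) * (S s * I s)) volume 0 t :=
  intervalIntegrable_of_abs_le
    ((hlam.comp (measurable_const.sub measurable_id)).mul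
      (sol.measurable_S.mul sol.measurable_I)) fun s hs => by
    rw [abs_mul]
    exact mul_le_mul (hL _)
      (sol.abs_mul_le (uIcc_subset_Icc (left_mem_Icc.2 (ht.1.trans ht.2)) ht hs))
      (abs_nonneg _) ((abs_nonneg _).trans (hL 0))

lemma measurable_dist (sol : IsBoundedSolution T C S0 h lam S I)
    (sol' : IsBoundedSolution T C S0 h lam S' I') :
    Measurable fun s => |S s - S' s| + |I s - I' s| :=
  (sol.measurable_S.sub sol'.measurable_S).abs.add (sol.measurable_I.sub sol'.measurable_I).abs

lemma dist_le (sol : IsBoundedSolution T C S0 h lam S I)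
    (sol' : IsBoundedSolution T C S0 h lam S' I') {s : ℝ} (hs : s ∈ Icc 0 T) :
    |S s - S' s| + |I s - I' s| ≤ 1 + C := by
  obtain ⟨⟨hS0, hS1⟩, hI0, hIC⟩ := sol.mem_Icc s hs
  obtain ⟨⟨hS0', hS1'⟩, hI0', hIC'⟩ := sol'.mem_Icc s hs
  have hS := abs_sub_le_of_le_of_le hS0 hS1 hS0' hS1'
  have hI := abs_sub_le_of_le_of_le hI0 hIC hI0' hIC'
  linarith

lemma abs_mul_sub_mul_le_dist (sol : IsBoundedSolution T C S0 h lam S I)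
    (sol' : IsBoundedSolution T C S0 h lam S' I') {s : ℝ} (hs : s ∈ Icc 0 T) :
    |S s * I s - S' s * I' s| ≤ (1 + C) * (|S s - S' s| + |I s - I' s|) := by
  obtain ⟨⟨hS0, hS1⟩, -⟩ := sol.mem_Icc s hs
  obtain ⟨-, hI0', hIC'⟩ := sol'.mem_Icc s hs
  have hS : |S s| ≤ 1 := by rwa [abs_of_nonneg hS0]
  have hI' : |I' s| ≤ C := by rwa [abs_of_nonneg hI0']
  calc |S s * I s - S' s * I' s| ≤ |S s| * |I s - I' s| + |I' s| * |S s - S' s| :=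
        abs_mul_sub_mul_le _ _ _ _
    _ ≤ 1 * |I s - I' s| + C * |S s - S' s| := by gcongr
    _ ≤ (1 + C) * (|S s - S' s| + |I s - I' s|) := by
      nlinarith [abs_nonneg (S s - S' s), abs_nonneg (I s - I' s)]

lemma dist_le_mul_integral (sol : IsBoundedSolution T C S0 h lam S I)
    (sol' : IsBoundedSolution T C S0 h lam S' I') (hlam : Measurable lam)
    (hL : ∀ x, |lam x| ≤ L) (ht : t ∈ Icc 0 T) :
    |S t - S' t| + |I t - I' t|
      ≤ (1 + L) * (1 + C) * ∫ s in 0..t, (|S s - S' s| + |I s - I' s|) := by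
  set D := fun s => |S s - S' s| + |I s - I' s|
  have hsub : Icc 0 t ⊆ Icc 0 T := Icc_subset_Icc_right ht.2
  have hDi : IntervalIntegrable D volume 0 t :=
    intervalIntegrable_of_abs_le (sol.measurable_dist sol') fun s hs => by
      rw [uIcc_of_le ht.1] at hs
      rw [abs_of_nonneg (by positivity)]
      exact sol.dist_le sol' (hsub hs)
  have hS : |S t - S' t| ≤ (1 + C) * ∫ s in 0..t, D s := by
    rw [sol.eq_S t ht, sol'.eq_S t ht, sub_sub_sub_cancel_left,
      ← intervalIntegral.integral_const_mul]
    refine abs_integral_sub_integral_le ht.1 (sol'.intervalIntegrable_mul ht)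
      (sol.intervalIntegrable_mul ht) (hDi.const_mul _) fun s hs => ?_
    rw [abs_sub_comm]
    exact sol.abs_mul_sub_mul_le_dist sol' (hsub hs)
  have hI : |I t - I' t| ≤ L * (1 + C) * ∫ s in 0..t, D s := by
    rw [sol.eq_I t ht, sol'.eq_I t ht, add_sub_add_left_eq_sub,
      ← intervalIntegral.integral_const_mul]
    refine abs_integral_sub_integral_le ht.1 (sol.intervalIntegrable_kernel_mul hlam hL ht)
      (sol'.intervalIntegrable_kernel_mul hlam hL ht) (hDi.const_mul _) fun s hs => ?_
    rw [← mul_sub, abs_mul, mul_assoc]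
    exact mul_le_mul (hL _) (sol.abs_mul_sub_mul_le_dist sol' (hsub hs)) (abs_nonneg _)
      ((abs_nonneg _).trans (hL 0))
  calc D t ≤ (1 + C) * (∫ s in 0..t, D s) + L * (1 + C) * ∫ s in 0..t, D s := add_le_add hS hI
    _ = (1 + L) * (1 + C) * ∫ s in 0..t, D s := by ring

end IsBoundedSolution

theorem stmt7_general (T lamstar C : ℝ)
    (h : ℝ → ℝ)
    (lam : ℝ → ℝ) (hlamm : Measurable lam) (hlam0 : ∀ t, 0 ≤ lam t)
    (hlamb : ∀ t, lam t ≤ lamstar)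
    (S0 : ℝ)
    (S1 I1 S2 I2 : ℝ → ℝ)
    (hm : Measurable S1 ∧ Measurable I1 ∧ Measurable S2 ∧ Measurable I2)
    (hb1 : ∀ t ∈ Icc (0:ℝ) T, S1 t ∈ Icc (0:ℝ) 1 ∧ I1 t ∈ Icc (0:ℝ) C)
    (hb2 : ∀ t ∈ Icc (0:ℝ) T, S2 t ∈ Icc (0:ℝ) 1 ∧ I2 t ∈ Icc (0:ℝ) C)
    (heq1S : ∀ t ∈ Icc (0:ℝ) T, S1 t = S0 - ∫ s in (0:ℝ)..t, S1 s * I1 s)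
    (heq1I : ∀ t ∈ Icc (0:ℝ) T, I1 t = h t + ∫ s in (0:ℝ)..t, lam (t - s) * (S1 s * I1 s))
    (heq2S : ∀ t ∈ Icc (0:ℝ) T, S2 t = S0 - ∫ s in (0:ℝ)..t, S2 s * I2 s)
    (heq2I : ∀ t ∈ Icc (0:ℝ) T, I2 t = h t + ∫ s in (0:ℝ)..t, lam (t - s) * (S2 s * I2 s)) :
    ∀ t ∈ Icc (0:ℝ) T, S1 t = S2 t ∧ I1 t = I2 t := by
  intro t ht
  obtain ⟨hmS1, hmI1, hmS2, hmI2⟩ := hm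
  have sol₁ : IsBoundedSolution T C S0 h lam S1 I1 := ⟨hmS1, hmI1, hb1, heq1S, heq1I⟩
  have sol₂ : IsBoundedSolution T C S0 h lam S2 I2 := ⟨hmS2, hmI2, hb2, heq2S, heq2I⟩
  have hL : ∀ x, |lam x| ≤ lamstar := fun x => (abs_of_nonneg (hlam0 x)).trans_le (hlamb x)
  have hK : 0 ≤ (1 + lamstar) * (1 + C) := by
    have hlamstar : 0 ≤ lamstar := (abs_nonneg _).trans (hL 0)
    have hC : 0 ≤ C := (hb1 t ht).2.1.trans (hb1 t ht).2.2
    positivity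
  have hdist := eq_zero_of_le_mul_integral (sol₁.measurable_dist sol₂) hK
    (fun _ _ => by positivity) (fun _ => sol₁.dist_le sol₂)
    (fun _ => sol₁.dist_le_mul_integral sol₂ hlamm hL) t ht
  rw [add_eq_zero_iff_of_nonneg (abs_nonneg _) (abs_nonneg _), abs_eq_zero, abs_eq_zero,
    sub_eq_zero, sub_eq_zero] at hdist
  exact hdist

theorem stmt7 (T lamstar C : ℝ) (hT : 0 < T)
    (h : ℝ → ℝ) (hh : Measurable h) (hhnn : ∀ t, 0 ≤ h t) (hhbd : ∃ M, ∀ t, h t ≤ M)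
    (lam : ℝ → ℝ) (hlamm : Measurable lam) (hlam0 : ∀ t, 0 ≤ lam t)
    (hlamb : ∀ t, lam t ≤ lamstar)
    (S0 : ℝ) (hS0 : S0 ∈ Icc (0:ℝ) 1)
    (S1 I1 S2 I2 : ℝ → ℝ)
    (hm : Measurable S1 ∧ Measurable I1 ∧ Measurable S2 ∧ Measurable I2)
    (hb1 : ∀ t ∈ Icc (0:ℝ) T, S1 t ∈ Icc (0:ℝ) 1 ∧ I1 t ∈ Icc (0:ℝ) C)
    (hb2 : ∀ t ∈ Icc (0:ℝ) T, S2 t ∈ Icc (0:ℝ) 1 ∧ I2 t ∈ Icc (0:ℝ) C)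
    (heq1S : ∀ t ∈ Icc (0:ℝ) T, S1 t = S0 - ∫ s in (0:ℝ)..t, S1 s * I1 s)
    (heq1I : ∀ t ∈ Icc (0:ℝ) T, I1 t = h t + ∫ s in (0:ℝ)..t, lam (t - s) * (S1 s * I1 s))
    (heq2S : ∀ t ∈ Icc (0:ℝ) T, S2 t = S0 - ∫ s in (0:ℝ)..t, S2 s * I2 s)
    (heq2I : ∀ t ∈ Icc (0:ℝ) T, I2 t = h t + ∫ s in (0:ℝ)..t, lam (t - s) * (S2 s * I2 s)) :
    ∀ t ∈ Icc (0:ℝ) T, S1 t = S2 t ∧ I1 t = I2 t :=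
  stmt7_general T lamstar C h lam hlamm hlam0 hlamb S0 S1 I1 S2 I2 hm hb1 hb2 heq1S heq1I heq2S
    heq2I
end

section
/- Let ρ < 0, let F^c = 1−F be the complement of a c.d.f. on [0,∞) with ∫₀^∞ F^c(s) e^{-ρs} ds < ∞, and let λ̄ : [0,∞) → [0,∞) be integrable with ∫₀^∞ λ̄(t) e^{-ρt} dt = 1. Define λ̄_ρ(t) = (∫₀^∞ λ̄(t+s) e^{-ρs} ds) / (∫₀^∞ F^c(s) e^{-ρs} ds). Then the functions 𝔍(t) = −ρ e^{ρt}, I(t) = −𝐢 e^{ρt} with 𝐢 = ∫₀^∞ F^c(s) ρ e^{-ρs} ds, satisfy I(0) λ̄_ρ(t) + ∫₀^t λ̄(t−s) 𝔍(s) ds = 𝔍(t) for all t ≥ 0, where I(0) = −𝐢. -/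
/-!
Substituting `u = t + s`, resp. `u = t - s`, turns both integrals on the left into `e^{ρt}` times a
piece of the characteristic integral `∫₀^∞ λ̄(u) e^{-ρu} du = 1`: its tail over `(t, ∞)` and its
head over `(0, t]`. As `I(0) = -ρ ∫₀^∞ F^c(s) e^{-ρs} ds`, the normalisation of `λ̄_ρ` cancels and
the left side is `-ρ e^{ρt} (tail + head) = -ρ e^{ρt}`.
-/

open MeasureTheory Set

lemma setIntegral_Ioi_comp_add_mul_exp (f : ℝ → ℝ) (ρ t : ℝ) :
    ∫ s in Ioi (0:ℝ), f (t + s) * Real.exp (-ρ * s) =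
      Real.exp (ρ * t) * ∫ u in Ioi t, f u * Real.exp (-ρ * u) := by
  have hpre : (fun s : ℝ => t + s) ⁻¹' Ioi t = Ioi 0 := by ext; simp
  have hshift := (measurePreserving_add_left volume t).setIntegral_preimage_emb
    (MeasurableEquiv.addLeft t).measurableEmbedding (fun u => f u * Real.exp (-ρ * u)) (Ioi t)
  rw [hpre] at hshift
  rw [← hshift, ← integral_const_mul]
  refine setIntegral_congr_fun measurableSet_Ioi fun s _ => ?_
  rw [mul_left_comm, ← Real.exp_add]
  ring_nf

lemma intervalIntegral_comp_sub_mul_exp (f : ℝ → ℝ) (ρ t : ℝ) :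
    ∫ s in (0:ℝ)..t, f (t - s) * Real.exp (ρ * s) =
      Real.exp (ρ * t) * ∫ u in (0:ℝ)..t, f u * Real.exp (-ρ * u) := by
  have hreflect := intervalIntegral.integral_comp_sub_left
    (fun u => f u * Real.exp (ρ * (t - u))) t (a := 0) (b := t)
  simp only [sub_self, sub_zero, sub_sub_cancel] at hreflect
  rw [hreflect, ← intervalIntegral.integral_const_mul]
  refine intervalIntegral.integral_congr fun u _ => ?_
  rw [mul_left_comm, ← Real.exp_add]
  ring_nf

theorem stmt12_general (ρ : ℝ) (F : ℝ → ℝ)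
    (hFpos : 0 < ∫ s in Ioi (0:ℝ), (1 - F s) * Real.exp (-ρ * s))
    (lam : ℝ → ℝ)
    (hchar : (∫ t in Ioi (0:ℝ), lam t * Real.exp (-ρ * t)) = 1) :
    ∀ t : ℝ, 0 ≤ t →
      (-(∫ s in Ioi (0:ℝ), (1 - F s) * ρ * Real.exp (-ρ * s))) *
          ((∫ s in Ioi (0:ℝ), lam (t + s) * Real.exp (-ρ * s)) /
            (∫ s in Ioi (0:ℝ), (1 - F s) * Real.exp (-ρ * s))) +
        (∫ s in (0:ℝ)..t, lam (t - s) * (-ρ * Real.exp (ρ * s))) =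
      -ρ * Real.exp (ρ * t) := by
  intro t ht
  set C := ∫ s in Ioi (0:ℝ), (1 - F s) * Real.exp (-ρ * s)
  have hI0 : ∫ s in Ioi (0:ℝ), (1 - F s) * ρ * Real.exp (-ρ * s) = ρ * C := by
    rw [← integral_const_mul]
    exact setIntegral_congr_fun measurableSet_Ioi fun s _ => by ring
  have hint : IntegrableOn (fun u => lam u * Real.exp (-ρ * u)) (Ioi 0) :=
    Integrable.of_integral_ne_zero (hchar ▸ one_ne_zero)
  have hsplit := (intervalIntegral.integral_interval_add_Ioi hint
    (hint.mono_set (Ioi_subset_Ioi ht))).trans hchar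
  have hconv : ∫ s in (0:ℝ)..t, lam (t - s) * (-ρ * Real.exp (ρ * s)) =
      -ρ * ∫ s in (0:ℝ)..t, lam (t - s) * Real.exp (ρ * s) := by
    rw [← intervalIntegral.integral_const_mul]
    exact intervalIntegral.integral_congr fun s _ => by ring
  rw [hI0, hconv, setIntegral_Ioi_comp_add_mul_exp, intervalIntegral_comp_sub_mul_exp]
  generalize ∫ u in (0:ℝ)..t, lam u * Real.exp (-ρ * u) = head at hsplit ⊢
  generalize ∫ u in Ioi t, lam u * Real.exp (-ρ * u) = tail at hsplit ⊢
  rw [div_eq_mul_inv]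
  linear_combination (-ρ * Real.exp (ρ * t)) * (tail * mul_inv_cancel₀ hFpos.ne' + hsplit)

theorem stmt12 (ρ : ℝ) (hρ : ρ < 0) (F : ℝ → ℝ) (hFmono : Monotone F) (hF0 : F 0 = 0)
    (hFrange : ∀ t, 0 ≤ F t ∧ F t ≤ 1)
    (hFint : IntegrableOn (fun s => (1 - F s) * Real.exp (-ρ * s)) (Ioi 0))
    (hFpos : 0 < ∫ s in Ioi (0:ℝ), (1 - F s) * Real.exp (-ρ * s))
    (lam : ℝ → ℝ) (hlm : Measurable lam) (hlnn : ∀ t, 0 ≤ lam t)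
    (hlint : IntegrableOn lam (Ioi 0))
    (hchar : (∫ t in Ioi (0:ℝ), lam t * Real.exp (-ρ * t)) = 1) :
    ∀ t : ℝ, 0 ≤ t →
      (-(∫ s in Ioi (0:ℝ), (1 - F s) * ρ * Real.exp (-ρ * s))) *
          ((∫ s in Ioi (0:ℝ), lam (t + s) * Real.exp (-ρ * s)) /
            (∫ s in Ioi (0:ℝ), (1 - F s) * Real.exp (-ρ * s))) +
        (∫ s in (0:ℝ)..t, lam (t - s) * (-ρ * Real.exp (ρ * s))) =
      -ρ * Real.exp (ρ * t) :=
  stmt12_general ρ F hFpos lam hchar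
end
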